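/- arXiv:2002.05722 — 3 statements merged into one kernel-verified Lean document; each statement's English description precedes it below -/
import Mathlib

section
/- For all natural numbers n and real x, y, the two-variable Legendre polynomial P_n(x,y) := ((-1)^n/√π) Σ_{r=0}^{⌊n/2⌋} Γ(n-r+1/2) x^(n-2r) (-y)^r / ((n-2r)! r!) equals the integral (1/(n! √π)) ∫_0^∞ e^{-s} s^{-1/2} H_n(-s x, -s y) ds. -/
open Real Finset MeasureTheory

noncomputable def hermite2 (n : ℕ) (x y : ℝ) : ℝ :=
  (Nat.factorial n : ℝ) *
    ∑ r ∈ Finset.range (n / 2 + 1),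
      x ^ (n - 2 * r) * y ^ r / ((Nat.factorial (n - 2 * r) : ℝ) * (Nat.factorial r : ℝ))

noncomputable def legendre2 (n : ℕ) (x y : ℝ) : ℝ :=
  ((-1 : ℝ) ^ n / Real.sqrt Real.pi) *
    ∑ r ∈ Finset.range (n / 2 + 1),
      Real.Gamma ((n : ℝ) - r + 1 / 2) * x ^ (n - 2 * r) * (-y) ^ r /
        ((Nat.factorial (n - 2 * r) : ℝ) * (Nat.factorial r : ℝ))

/-!
Substituting `(-s x, -s y)` into `H_n` turns the `r`-th term into `(-1)^n s^(n-r)` times the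
`r`-th coefficient of `P_n` (without its Gamma factor). Integrating term by term against
`e^(-s) s^(-1/2)` produces exactly `Γ(n - r + 1/2)`, by Euler's integral.
-/

lemma two_mul_le_of_mem_range_half_succ {n r : ℕ} (hr : r ∈ range (n / 2 + 1)) : 2 * r ≤ n := by
  rw [mem_range] at hr
  omega

lemma hermite2_neg_left (n : ℕ) (x y : ℝ) : hermite2 n (-x) y = (-1) ^ n * hermite2 n x y := by
  simp only [hermite2, mul_sum]
  refine sum_congr rfl fun r hr => ?_
  have h2r := two_mul_le_of_mem_range_half_succ hr
  have hsign : (-1 : ℝ) ^ (n - 2 * r) = (-1) ^ n := by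
    calc (-1 : ℝ) ^ (n - 2 * r) = (-1) ^ (n - 2 * r) * ((-1) ^ 2) ^ r := by norm_num
      _ = (-1) ^ n := by rw [← pow_mul, ← pow_add, Nat.sub_add_cancel h2r]
  rw [neg_pow x, hsign]
  ring

lemma hermite2_mul_mul (n : ℕ) (s x y : ℝ) :
    hermite2 n (s * x) (s * y) = (Nat.factorial n : ℝ) *
      ∑ r ∈ range (n / 2 + 1), s ^ (n - r) *
        (x ^ (n - 2 * r) * y ^ r / ((Nat.factorial (n - 2 * r) : ℝ) * (Nat.factorial r : ℝ))) := by
  unfold hermite2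
  congr 1
  refine sum_congr rfl fun r hr => ?_
  have hpow : s ^ (n - 2 * r) * s ^ r = s ^ (n - r) := by
    rw [← pow_add]
    congr 1
    have := two_mul_le_of_mem_range_half_succ hr
    omega
  rw [mul_pow, mul_pow, ← hpow]
  ring

lemma exp_neg_mul_rpow_neg_half_mul_pow_eq (k : ℕ) {s : ℝ} (hs : 0 < s) :
    exp (-s) * s ^ (-(1 / 2) : ℝ) * s ^ k = exp (-s) * s ^ ((k + 1 / 2 : ℝ) - 1) := by
  rw [mul_assoc, ← rpow_natCast, ← rpow_add hs]
  ring_nf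

lemma integrableOn_exp_neg_mul_rpow_neg_half_mul_pow (k : ℕ) :
    IntegrableOn (fun s : ℝ => exp (-s) * s ^ (-(1 / 2) : ℝ) * s ^ k) (Set.Ioi 0) :=
  (GammaIntegral_convergent (by positivity : (0 : ℝ) < k + 1 / 2)).congr_fun
    (fun _ hs => (exp_neg_mul_rpow_neg_half_mul_pow_eq k hs).symm) measurableSet_Ioi

lemma integral_exp_neg_mul_rpow_neg_half_mul_pow (k : ℕ) :
    ∫ s in Set.Ioi (0 : ℝ), exp (-s) * s ^ (-(1 / 2) : ℝ) * s ^ k = Gamma (k + 1 / 2) := by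
  rw [Gamma_eq_integral (by positivity)]
  exact setIntegral_congr_fun measurableSet_Ioi fun _ hs => exp_neg_mul_rpow_neg_half_mul_pow_eq k hs

theorem legendre2_integral_repr (n : ℕ) (x y : ℝ) :
    legendre2 n x y =
      (1 / ((Nat.factorial n : ℝ) * Real.sqrt Real.pi)) *
        ∫ s in Set.Ioi (0 : ℝ),
          Real.exp (-s) * s ^ (-(1 / 2) : ℝ) * hermite2 n (-s * x) (-s * y) := by
  set c : ℕ → ℝ := fun r =>
    x ^ (n - 2 * r) * (-y) ^ r / ((Nat.factorial (n - 2 * r) : ℝ) * (Nat.factorial r : ℝ))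
  have hexpand : (fun s : ℝ => exp (-s) * s ^ (-(1 / 2) : ℝ) * hermite2 n (-s * x) (-s * y)) =
      fun s => ∑ r ∈ range (n / 2 + 1),
        exp (-s) * s ^ (-(1 / 2) : ℝ) * s ^ (n - r) * ((-1) ^ n * (Nat.factorial n : ℝ) * c r) := by
    funext s
    rw [neg_mul, hermite2_neg_left, neg_mul_comm, hermite2_mul_mul, mul_sum, mul_sum, mul_sum]
    refine sum_congr rfl fun r _ => ?_
    ring
  rw [hexpand, integral_finsetSum _ fun r _ =>
    (integrableOn_exp_neg_mul_rpow_neg_half_mul_pow (n - r)).mul_const _]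
  simp only [integral_mul_const, integral_exp_neg_mul_rpow_neg_half_mul_pow, legendre2, mul_sum]
  refine sum_congr rfl fun r hr => ?_
  rw [Nat.cast_sub (by have := two_mul_le_of_mem_range_half_succ hr; omega)]
  simp only [c]
  field_simp
end

section
/- For real x, y, t with |x t| + |y| t² < 1, the series Σ_{n=0}^∞ t^n P_n(x,y) converges and equals 1/√(1 + x t + y t²), where P_n(x,y) = ((-1)^n/√π) Σ_{r=0}^{⌊n/2⌋} Γ(n-r+1/2) x^(n-2r) (-y)^r / ((n-2r)! r!). -/
/-! By the binomial series, `1 / √(1 - v) = ∑ₘ Γ(m + 1/2) / (√π m!) vᵐ` for `|v| < 1`.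
Put `v = -(x t) - y t²` and expand each `vᵐ` by the binomial theorem: the resulting double series
over `(s, r)` is absolutely convergent because `|x t| + |y| t² < 1`, and its `(s, r)` term is
`tˢ⁺²ʳ` times the `r`-th summand of `P_{s+2r}(x, y)`. Regrouping it by `n = s + 2r` gives the
generating function. -/

open Real Finset

theorem tsum_fiber_eq_sum {α β γ : Type*} [AddCommMonoid α] [TopologicalSpace α] {f : β → α}
    {g : β → γ} {s : γ → Finset β} (hs : ∀ c b, b ∈ s c ↔ g b = c) (c : γ) :
    ∑' b : {b // g b = c}, f b = ∑ b ∈ s c, f b := by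
  rw [← Finset.tsum_subtype]
  exact (Equiv.subtypeEquivRight fun b => (hs c b).symm).tsum_eq (f ∘ Subtype.val)

section Regroup

variable {α : Type*} [AddCommGroup α] [UniformSpace α] [IsUniformAddGroup α] [CompleteSpace α]
  [T2Space α]

theorem HasSum.sum_fiberwise_finset {β γ : Type*} {f : β → α} {g : β → γ}
    {s : γ → Finset β} {a : α} (hf : HasSum f a)
    (hs : ∀ c b, b ∈ s c ↔ g b = c) : HasSum (fun c => ∑ b ∈ s c, f b) a := by
  convert hf.tsum_fiberwise g using 2 with c
  exact (tsum_fiber_eq_sum hs c).symm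

theorem summable_of_summable_sum_fiberwise_finset {β γ : Type*} {f : β → ℝ} {g : β → γ}
    {s : γ → Finset β} (hf : 0 ≤ f) (hs : ∀ c b, b ∈ s c ↔ g b = c)
    (h : Summable fun c => ∑ b ∈ s c, f b) : Summable f := by
  refine (Equiv.sigmaFiberEquiv g).summable_iff.1 <|
    (summable_sigma_of_nonneg fun _ => hf _).2 ⟨fun c => ?_, ?_⟩
  · have : Finite {b // g b = c} := .of_equiv _ (Equiv.subtypeEquivRight (hs c))
    exact Summable.of_finite
  · simpa only [Equiv.sigmaFiberEquiv_apply, tsum_fiber_eq_sum (f := f) hs] using h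

theorem HasSum.sum_fiberwise_add_two_mul {f : ℕ × ℕ → α} {a : α} (hf : HasSum f a) :
    HasSum (fun n => ∑ r ∈ range (n / 2 + 1), f (n - 2 * r, r)) a := by
  have hs : ∀ n p,
      p ∈ (range (n / 2 + 1)).image (fun r => (n - 2 * r, r)) ↔ p.1 + 2 * p.2 = n := by
    rintro n ⟨s, r⟩
    simp only [mem_image, mem_range, Prod.mk.injEq]
    constructor
    · rintro ⟨r, hr, hs, rfl⟩; omega
    · rintro rfl; exact ⟨r, by omega, by omega, rfl⟩
  convert hf.sum_fiberwise_finset hs with n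
  exact (sum_image fun _ _ _ _ h => (Prod.ext_iff.1 h).2).symm

end Regroup

theorem sum_antidiagonal_choose_mul_pow_mul_pow {R : Type*} [CommSemiring R] (c : ℕ → R)
    (a b : R) (k : ℕ) :
    ∑ p ∈ antidiagonal k, c (p.1 + p.2) * (p.1 + p.2).choose p.1 * a ^ p.1 * b ^ p.2 =
      c k * (a + b) ^ k := by
  rw [Nat.sum_antidiagonal_eq_sum_range_succ
    (fun i j => c (i + j) * (i + j).choose i * a ^ i * b ^ j), add_pow, mul_sum]
  refine sum_congr rfl fun i hi => ?_
  rw [Nat.add_sub_cancel' (Nat.lt_succ_iff.1 (mem_range.1 hi))]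
  ring

theorem hasSum_choose_mul_pow_mul_pow {c : ℕ → ℝ} {a b S : ℝ}
    (hS : HasSum (fun k => c k * (a + b) ^ k) S)
    (habs : Summable fun k => |c k| * (|a| + |b|) ^ k) :
    HasSum (fun p : ℕ × ℕ => c (p.1 + p.2) * (p.1 + p.2).choose p.1 * a ^ p.1 * b ^ p.2) S := by
  set G := fun p : ℕ × ℕ => c (p.1 + p.2) * (p.1 + p.2).choose p.1 * a ^ p.1 * b ^ p.2
  have hfib : ∀ (k : ℕ) (p : ℕ × ℕ), p ∈ antidiagonal k ↔ p.1 + p.2 = k :=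
    fun _ _ => mem_antidiagonal
  have habsG : Summable fun p => |G p| := by
    refine summable_of_summable_sum_fiberwise_finset (fun _ => abs_nonneg _) hfib ?_
    convert habs using 2 with k
    rw [← sum_antidiagonal_choose_mul_pow_mul_pow (fun k => |c k|)]
    simp only [G, abs_mul, abs_pow, Nat.abs_cast]
  have hG := habsG.of_abs.hasSum
  have hfiber := hG.sum_fiberwise_finset hfib
  simp only [G, sum_antidiagonal_choose_mul_pow_mul_pow] at hfiber
  rwa [hS.unique hfiber]

theorem Real.Gamma_nat_add_half_eq_ascPochhammer (n : ℕ) :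
    Gamma (n + 1 / 2) = √π * (ascPochhammer ℝ n).eval (1 / 2) := by
  induction n with
  | zero => simp [-one_div, Gamma_one_half_eq]
  | succ n ih =>
    rw [Nat.cast_succ, add_right_comm, Gamma_add_one (by positivity), ih, ascPochhammer_succ_eval]
    ring

noncomputable def invSqrtCoeff (n : ℕ) : ℝ := Gamma (n + 1 / 2) / (√π * n.factorial)

theorem invSqrtCoeff_nonneg (n : ℕ) : 0 ≤ invSqrtCoeff n :=
  div_nonneg (Gamma_pos_of_pos (by positivity)).le (by positivity)

theorem invSqrtCoeff_eq_multichoose (n : ℕ) : invSqrtCoeff n = Ring.multichoose (1 / 2 : ℝ) n := by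
  have h := Ring.factorial_nsmul_multichoose_eq_ascPochhammer (1 / 2 : ℝ) n
  rw [Polynomial.ascPochhammer_smeval_eq_eval, nsmul_eq_mul] at h
  rw [invSqrtCoeff, Gamma_nat_add_half_eq_ascPochhammer, ← h]
  field_simp

theorem hasSum_invSqrtCoeff_mul_pow {v : ℝ} (hv : |v| < 1) :
    HasSum (fun n => invSqrtCoeff n * v ^ n) (1 / √(1 - v)) := by
  have hv' : v ∈ Metric.eball (0 : ℝ) 1 := by simpa [edist_dist] using hv
  have h := (one_div_one_sub_rpow_hasFPowerSeriesOnBall_zero (1 / 2)).hasSum hv'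
  rw [FormalMultilinearSeries.ofScalars_apply_eq', zero_add, ← Real.sqrt_eq_rpow] at h
  simpa [invSqrtCoeff_eq_multichoose, Ring.multichoose_eq] using h

theorem pow_mul_legendre2_summand (x y t : ℝ) (s r : ℕ) :
    t ^ (s + 2 * r) * ((-1) ^ (s + 2 * r) / √π *
      (Gamma (((s + 2 * r : ℕ) : ℝ) - r + 1 / 2) * x ^ s * (-y) ^ r /
        (s.factorial * r.factorial))) =
    invSqrtCoeff (s + r) * (s + r).choose s * (-(x * t)) ^ s * (-(y * t ^ 2)) ^ r := by
  have harg : ((s + 2 * r : ℕ) : ℝ) - r + 1 / 2 = ((s + r : ℕ) : ℝ) + 1 / 2 := by push_cast; ring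
  rw [harg, invSqrtCoeff, Nat.cast_choose ℝ (Nat.le_add_right s r), Nat.add_sub_cancel_left,
    pow_add (-1 : ℝ), pow_mul, neg_one_sq, one_pow]
  have hπ : (0 : ℝ) < √π := by positivity
  field_simp
  ring

theorem pow_mul_legendre2_eq_sum (x y t : ℝ) (n : ℕ) :
    t ^ n * legendre2 n x y = ∑ r ∈ range (n / 2 + 1), invSqrtCoeff (n - 2 * r + r) *
      (n - 2 * r + r).choose (n - 2 * r) * (-(x * t)) ^ (n - 2 * r) * (-(y * t ^ 2)) ^ r := by
  rw [legendre2, mul_sum, mul_sum]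
  refine sum_congr rfl fun r hr => ?_
  obtain ⟨s, rfl⟩ : ∃ s, n = s + 2 * r := ⟨n - 2 * r, by grind⟩
  rw [Nat.add_sub_cancel, ← pow_mul_legendre2_summand]

theorem legendre2_genfun (x y t : ℝ) (h : |x * t| + |y| * t ^ 2 < 1) :
    HasSum (fun n : ℕ => t ^ n * legendre2 n x y)
      (1 / Real.sqrt (1 + x * t + y * t ^ 2)) := by
  have hab : |-(x * t)| + |-(y * t ^ 2)| < 1 := by
    simpa only [abs_neg, abs_mul y, abs_of_nonneg (sq_nonneg t)] using h
  have hsum := hasSum_invSqrtCoeff_mul_pow ((abs_add_le _ _).trans_lt hab)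
  have habs : Summable fun k => |invSqrtCoeff k| * (|-(x * t)| + |-(y * t ^ 2)|) ^ k := by
    simpa only [abs_of_nonneg (invSqrtCoeff_nonneg _)] using
      (hasSum_invSqrtCoeff_mul_pow (by rwa [abs_of_nonneg (by positivity)])).summable
  have hregroup := (hasSum_choose_mul_pow_mul_pow hsum habs).sum_fiberwise_add_two_mul
  rw [show 1 - (-(x * t) + -(y * t ^ 2)) = 1 + x * t + y * t ^ 2 by ring] at hregroup
  simpa only [pow_mul_legendre2_eq_sum] using hregroup
end

section
/- For every natural number m and real x, y, t with 1 + x t + y t² > 0, the m-th derivative with respect to t of (1 + x t + y t²)^{-1/2} equals m! · P_m( (x + 2 y t)/(1 + x t + y t²), y/(1 + x t + y t²) ) / √(1 + x t + y t²). -/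
open Real Finset

/-!
With `Q s = 1 + x s + y s²` one has `Q (t + h) = Q t * (1 + X h + Y h²)` for `X = Q' t / Q t` and
`Y = y / Q t`, and `P_m (X, Y)` is the coefficient of `h ^ m` in `(1 + X h + Y h²) ^ (-1/2)`
(expanded binomially twice, this is `quadPowCoeff (-1/2) m X Y`). So the formula is Taylor's, and it holds for every real
exponent `a` in place of `-1/2`. We prove it by induction on `m`: differentiating the monomial
`Q'^(k-r) y^r Q^(a-k)` gives only the monomials of indices `(k, r+1)` and `(k+1, r)`, and the
recurrences of `Ring.choose a k` and `k.choose r` make their coefficients add up.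
-/

open Nat Topology

theorem Ring.succ_nsmul_choose_succ {R : Type*} [NonAssocRing R] [Pow R ℕ] [NatPowAssoc R]
    [BinomialRing R] (r : R) (k : ℕ) :
    (k + 1) • Ring.choose r (k + 1) = Ring.choose r k * (r - k) := by
  simpa [Ring.choose_one_right] using Ring.choose_smul_choose r (Nat.le_succ k)

theorem Nat.cast_choose_succ_right_mul {R : Type*} [NonAssocRing R] (n k : ℕ) :
    (n.choose (k + 1) : R) * (k + 1) = n.choose k * ((n : R) - k) := by
  rcases le_or_gt k n with hkn | hnk
  · have := congrArg (Nat.cast : ℕ → R) (Nat.choose_succ_right_eq n k)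
    push_cast [hkn] at this
    exact this
  · simp [Nat.choose_eq_zero_of_lt hnk, Nat.choose_eq_zero_of_lt (hnk.trans k.lt_succ_self)]

theorem Nat.cast_choose_mul_succ {R : Type*} [NonAssocRing R] (n k : ℕ) :
    (n.choose k : R) * (n + 1) = (n + 1).choose k * ((n : R) + 1 - k) := by
  rcases le_or_gt k (n + 1) with hkn | hnk
  · have := congrArg (Nat.cast : ℕ → R) (Nat.choose_mul_succ_eq n k)
    push_cast [hkn] at this
    exact this
  · simp [Nat.choose_eq_zero_of_lt hnk, Nat.choose_eq_zero_of_lt (by omega : n < k)]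

theorem Ring.choose_neg_one_half (n : ℕ) :
    Ring.choose (-(1 / 2) : ℝ) n = (-1) ^ n * Gamma (n + 1 / 2) / (√π * n !) := by
  induction n with
  | zero =>
    rw [Ring.choose_zero_right]
    norm_num [Real.Gamma_one_half_eq, (Real.sqrt_pos.2 pi_pos).ne']
  | succ n ih =>
    have hrec := Ring.succ_nsmul_choose_succ (-(1 / 2) : ℝ) n
    rw [nsmul_eq_mul, ih, mul_comm] at hrec
    have hGamma : Gamma ((n + 1 : ℕ) + 1 / 2) = (n + 1 / 2) * Gamma (n + 1 / 2) := by
      rw [← Real.Gamma_add_one (by positivity)]; push_cast; ring_nf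
    rw [eq_div_of_mul_eq (by positivity) hrec, hGamma, Nat.factorial_succ]
    generalize Gamma (n + 1 / 2) = G
    push_cast
    field_simp
    ring

noncomputable def quadPowCoeff (a : ℝ) (m : ℕ) (X Y : ℝ) : ℝ :=
  ∑ p ∈ antidiagonal m, Ring.choose a p.1 * p.1.choose p.2 * X ^ (p.1 - p.2) * Y ^ p.2

theorem legendre2_eq_quadPowCoeff (m : ℕ) (X Y : ℝ) :
    legendre2 m X Y = quadPowCoeff (-(1 / 2)) m X Y := by
  rw [quadPowCoeff, ← Nat.sum_antidiagonal_swap]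
  simp only [Prod.fst_swap, Prod.snd_swap]
  rw [Nat.sum_antidiagonal_eq_sum_range_succ (fun r k =>
      Ring.choose (-(1 / 2) : ℝ) k * k.choose r * X ^ (k - r) * Y ^ r),
    ← sum_subset (range_subset_range.2 (by omega : m / 2 + 1 ≤ m.succ)) fun r _ hr => by
    rw [Nat.choose_eq_zero_of_lt (by simp at hr; omega)]; simp,
    legendre2, mul_sum]
  refine sum_congr rfl fun r hr => ?_
  obtain ⟨n, rfl⟩ : ∃ n, m = n + 2 * r := ⟨m - 2 * r, by simp at hr; omega⟩
  rw [show n + 2 * r - r = n + r by omega, show n + 2 * r - 2 * r = n by omega,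
    Nat.add_sub_cancel, Ring.choose_neg_one_half, ← Nat.choose_symm_add, Nat.cast_add_choose]
  have hG : ((n + 2 * r : ℕ) : ℝ) - r + 1 / 2 = (n + r : ℕ) + 1 / 2 := by push_cast; ring
  rw [hG, neg_pow Y, pow_add, pow_mul]
  field_simp
  ring

section QuadraticPower

variable (c x y a : ℝ)

theorem hasDerivAt_quadratic (t : ℝ) :
    HasDerivAt (fun s => c + x * s + y * s ^ 2) (x + 2 * y * t) t := by
  have := (((hasDerivAt_id' t).const_mul x).const_add c).fun_add
    ((hasDerivAt_pow 2 t).const_mul y)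
  exact this.congr_deriv (by norm_num; ring)

noncomputable def quadPowTerm (k r : ℕ) (s : ℝ) : ℝ :=
  (x + 2 * y * s) ^ (k - r) * y ^ r * (c + x * s + y * s ^ 2) ^ (a - k)

variable {c x y}

theorem hasDerivAt_choose_mul_quadPowTerm (k r : ℕ) {t : ℝ} (ht : c + x * t + y * t ^ 2 ≠ 0) :
    HasDerivAt (fun s => (k.choose r : ℝ) * quadPowTerm c x y a k r s)
      ((k.choose r : ℝ) * (2 * ((k : ℝ) - r) * quadPowTerm c x y a k (r + 1) t +
        (a - k) * quadPowTerm c x y a (k + 1) r t)) t := by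
  rcases le_or_gt r k with hrk | hkr
  · obtain ⟨n, rfl⟩ := Nat.exists_eq_add_of_le hrk
    have hlin : HasDerivAt (fun s => x + 2 * y * s) (2 * y) t := by
      simpa using ((hasDerivAt_id t).const_mul (2 * y)).const_add x
    have := (((hlin.fun_pow n).mul_const (y ^ r)).fun_mul
      ((hasDerivAt_quadratic c x y t).rpow_const (p := a - (r + n : ℕ)) (Or.inl ht))).const_mul
      (((r + n).choose r : ℕ) : ℝ)
    simp only [quadPowTerm, show r + n - (r + 1) = n - 1 by omega,
      show r + n + 1 - r = n + 1 by omega, Nat.add_sub_cancel_left]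
    refine this.congr_deriv ?_
    rw [show a - ((r + n + 1 : ℕ) : ℝ) = a - (r + n : ℕ) - 1 by push_cast; ring]
    rcases n with _ | n
    · simp only [add_zero, choose_self, cast_one, CharP.cast_eq_zero, pow_zero, one_mul,
        zero_mul, zero_add, sub_self]
      ring
    · simp only [Nat.add_sub_cancel]; push_cast; ring
  · simp [Nat.choose_eq_zero_of_lt hkr, hasDerivAt_const]

theorem hasDerivAt_sum_antidiagonal_quadPowTerm (m : ℕ) {t : ℝ}
    (ht : c + x * t + y * t ^ 2 ≠ 0) :
    HasDerivAt (fun s => ∑ p ∈ antidiagonal m,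
        Ring.choose a p.1 * p.1.choose p.2 * quadPowTerm c x y a p.1 p.2 s)
      ((m + 1) * ∑ p ∈ antidiagonal (m + 1),
        Ring.choose a p.1 * p.1.choose p.2 * quadPowTerm c x y a p.1 p.2 t) t := by
  have hterm := HasDerivAt.fun_sum (u := antidiagonal m) fun p _ =>
    (hasDerivAt_choose_mul_quadPowTerm a p.1 p.2 ht).const_mul (Ring.choose a p.1)
  simp only [← mul_assoc] at hterm
  refine hterm.congr_deriv ?_
  set T := quadPowTerm c x y a
  calc ∑ p ∈ antidiagonal m, Ring.choose a p.1 * p.1.choose p.2 *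
        (2 * ((p.1 : ℝ) - p.2) * T p.1 (p.2 + 1) t + (a - p.1) * T (p.1 + 1) p.2 t)
      = ∑ p ∈ antidiagonal m, 2 * ((p.2 + 1 : ℕ) : ℝ) *
            (Ring.choose a p.1 * p.1.choose (p.2 + 1) * T p.1 (p.2 + 1) t) +
          ∑ p ∈ antidiagonal m, (((p.1 + 1 : ℕ) : ℝ) - p.2) *
            (Ring.choose a (p.1 + 1) * (p.1 + 1).choose p.2 * T (p.1 + 1) p.2 t) := by
        rw [← sum_add_distrib]
        refine sum_congr rfl fun ⟨k, r⟩ _ => ?_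
        have h1 := Nat.cast_choose_succ_right_mul (R := ℝ) k r
        have h2 := Nat.cast_choose_mul_succ (R := ℝ) k r
        have h3 := Ring.succ_nsmul_choose_succ a k
        rw [nsmul_eq_mul, Nat.cast_succ] at h3
        push_cast
        linear_combination (-2 * Ring.choose a k * T k (r + 1) t) * h1
          - T (k + 1) r t * (k.choose r) * h3 + T (k + 1) r t * Ring.choose a (k + 1) * h2
    _ = ∑ p ∈ antidiagonal (m + 1), 2 * (p.2 : ℝ) *
            (Ring.choose a p.1 * p.1.choose p.2 * T p.1 p.2 t) +
          ∑ p ∈ antidiagonal (m + 1), ((p.1 : ℝ) - p.2) *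
            (Ring.choose a p.1 * p.1.choose p.2 * T p.1 p.2 t) := by
        rw [Nat.sum_antidiagonal_succ', Nat.sum_antidiagonal_succ (n := m)]
        simp
    _ = (m + 1) * ∑ p ∈ antidiagonal (m + 1),
          Ring.choose a p.1 * p.1.choose p.2 * T p.1 p.2 t := by
        rw [mul_sum, ← sum_add_distrib]
        refine sum_congr rfl fun ⟨k, r⟩ hp => ?_
        have hkr : (k : ℝ) + r = m + 1 := by exact_mod_cast mem_antidiagonal.mp hp
        linear_combination (Ring.choose a k * k.choose r * T k r t) * hkr

theorem iteratedDeriv_quadratic_rpow (m : ℕ) {t : ℝ} (ht : c + x * t + y * t ^ 2 ≠ 0) :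
    iteratedDeriv m (fun s => (c + x * s + y * s ^ 2) ^ a) t =
      m ! * ∑ p ∈ antidiagonal m,
        Ring.choose a p.1 * p.1.choose p.2 * quadPowTerm c x y a p.1 p.2 t := by
  induction m generalizing t with
  | zero => simp [quadPowTerm]
  | succ m ih =>
    have hne : {s | c + x * s + y * s ^ 2 ≠ 0} ∈ 𝓝 t :=
      (isOpen_ne_fun (by fun_prop) continuous_const).mem_nhds ht
    rw [iteratedDeriv_succ, (Filter.eventuallyEq_of_mem hne fun s hs => ih hs).deriv_eq,
      ((hasDerivAt_sum_antidiagonal_quadPowTerm a m ht).const_mul _).deriv, Nat.factorial_succ]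
    push_cast
    ring

theorem iteratedDeriv_quadratic_rpow_eq_quadPowCoeff (m : ℕ) {t : ℝ}
    (ht : c + x * t + y * t ^ 2 ≠ 0) :
    iteratedDeriv m (fun s => (c + x * s + y * s ^ 2) ^ a) t =
      m ! * (c + x * t + y * t ^ 2) ^ a *
        quadPowCoeff a m ((x + 2 * y * t) / (c + x * t + y * t ^ 2))
          (y / (c + x * t + y * t ^ 2)) := by
  rw [iteratedDeriv_quadratic_rpow a m ht, quadPowCoeff, mul_assoc]
  congr 1
  rw [mul_sum]
  refine sum_congr rfl fun ⟨k, r⟩ _ => ?_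
  rcases le_or_gt r k with hrk | hkr
  · obtain ⟨n, rfl⟩ := Nat.exists_eq_add_of_le hrk
    simp only [quadPowTerm, Nat.add_sub_cancel_left, Real.rpow_sub_natCast ht, div_pow]
    field_simp
    ring
  · simp [Nat.choose_eq_zero_of_lt hkr]

end QuadraticPower

theorem legendre2_rodriguez (m : ℕ) (x y t : ℝ) (h : 0 < 1 + x * t + y * t ^ 2) :
    iteratedDeriv m (fun s : ℝ => (1 + x * s + y * s ^ 2) ^ (-(1 / 2) : ℝ)) t =
      (Nat.factorial m : ℝ) *
        legendre2 m ((x + 2 * y * t) / (1 + x * t + y * t ^ 2))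
          (y / (1 + x * t + y * t ^ 2)) /
        Real.sqrt (1 + x * t + y * t ^ 2) := by
  rw [iteratedDeriv_quadratic_rpow_eq_quadPowCoeff _ m h.ne', ← legendre2_eq_quadPowCoeff,
    rpow_neg h.le, ← sqrt_eq_rpow]
  ring
end
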